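/- arXiv:2301.02599 — 2 statements merged into one kernel-verified Lean document; each statement's English description precedes it below -/
import Mathlib

section
/- For every real x > 1, one has 1 - x(log x)²/(x - 1)² + 2·log(4x/(x+1)²) ≤ 0. -/
/-!
The logarithmic mean `(x - 1) / log x` lies below the arithmetic mean `(x + 1) / 2`; this is the
first term of the series `log x = ∑ 2 t ^ (2k+1) / (2k+1)` with `t = (x - 1) / (x + 1)`. Hence
`q := 4x / (x + 1)²` is at most `x (log x)² / (x - 1)²`, and with `log q ≤ q - 1` the left-hand
side is at most `1 - q + 2 (q - 1) = q - 1 ≤ 0`.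
-/

open Real

theorem Real.two_mul_div_add_two_le_log_one_add {a : ℝ} (ha : 0 ≤ a) :
    2 * a / (a + 2) ≤ log (1 + a) := by
  have hterm_nonneg (k : ℕ) : 0 ≤ (2 : ℝ) * (1 / (2 * k + 1)) * (a / (a + 2)) ^ (2 * k + 1) := by
    positivity
  simpa [mul_div_assoc] using le_hasSum (hasSum_log_one_add ha) 0 fun k _ => hterm_nonneg k

theorem Real.two_mul_sub_one_div_add_one_le_log {x : ℝ} (hx : 1 ≤ x) :
    2 * (x - 1) / (x + 1) ≤ log x := by
  have h := two_mul_div_add_two_le_log_one_add (sub_nonneg.mpr hx)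
  rwa [add_sub_cancel, show x - 1 + 2 = x + 1 by ring] at h

theorem Real.four_mul_div_add_one_sq_le_mul_log_sq_div {x : ℝ} (hx : 1 < x) :
    4 * x / (x + 1) ^ 2 ≤ x * log x ^ 2 / (x - 1) ^ 2 := by
  have hx1 : 0 < x - 1 := sub_pos.mpr hx
  have hmean : 2 * (x - 1) / (x + 1) ≤ log x := two_mul_sub_one_div_add_one_le_log hx.le
  have hsq : (2 * (x - 1) / (x + 1)) ^ 2 ≤ log x ^ 2 := by gcongr
  calc 4 * x / (x + 1) ^ 2 = x * (2 * (x - 1) / (x + 1)) ^ 2 / (x - 1) ^ 2 := by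
        field_simp; norm_num
    _ ≤ x * log x ^ 2 / (x - 1) ^ 2 := by gcongr

theorem four_mul_div_add_one_sq_le_one (x : ℝ) : 4 * x / (x + 1) ^ 2 ≤ 1 :=
  div_le_one_of_le₀ (by nlinarith [sq_nonneg (x - 1)]) (sq_nonneg _)

theorem log_kantorovich_reformulation_le (x : ℝ) (hx : 1 < x) :
    1 - x * (Real.log x) ^ 2 / (x - 1) ^ 2 + 2 * Real.log (4 * x / (x + 1) ^ 2) ≤ 0 := by
  have hq_pos : 0 < 4 * x / (x + 1) ^ 2 := by positivity
  have hlog_q := log_le_sub_one_of_pos hq_pos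
  have hq_le := four_mul_div_add_one_sq_le_mul_log_sq_div hx
  have hq_one := four_mul_div_add_one_sq_le_one x
  linarith
end

section
/- For every real x > 0 with x ≠ 1 and every real p with 0 < p ≤ 1/2, one has Ĝ_p(x,1) ≥ K(x)^{-p(1-p)} · W_p(x,1), where K is the Kantorovich constant. -/
/-!
Put `x = exp (2 t)` and `q = 1 - p`. Then `K(x) = cosh² t`, `Ĝ_p(x,1) = eᵗ · p sinh t / sinh (p t)`
and `W_p(x,1) = Ĝ_p(x,1) · q sinh t / sinh (q t)`, so the claim reduces to
`q sinh t / sinh (q t) ≤ cosh^(2pq) t`. The function `f s = log (sinh s / s)` is convex on `(0, ∞)`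
and satisfies `f (2t) - f t = log cosh t`, so comparing the slopes of `f` over `[q t, t]` and
`[t, 2t]` gives `q sinh t / sinh (q t) ≤ cosh^(1-q) t = cosh^p t`; finally `p ≤ 2pq` as `p ≤ 1/2`.
-/

open Real Set

theorem convexOn_log_sinh_sub_log : ConvexOn ℝ (Ioi 0) (fun s => log (sinh s) - log s) := by
  refine convexOn_of_hasDerivWithinAt2_nonneg (convex_Ioi 0)
    (f' := fun s => cosh s / sinh s - s⁻¹) (f'' := fun s => (s ^ 2)⁻¹ - (sinh s ^ 2)⁻¹)
    ?_ ?_ ?_ ?_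
  · exact (continuous_sinh.continuousOn.log fun s hs => (sinh_pos_iff.2 hs).ne').sub
      (continuousOn_log.mono fun s hs => ne_of_gt hs)
  all_goals rw [interior_Ioi]; intro s (hs : 0 < s)
  · exact (((hasDerivAt_sinh s).log (sinh_pos_iff.2 hs).ne').sub
      (hasDerivAt_log hs.ne')).hasDerivWithinAt
  · refine (((hasDerivAt_cosh s).div (hasDerivAt_sinh s) (sinh_pos_iff.2 hs).ne').sub
      (hasDerivAt_inv hs.ne')).hasDerivWithinAt.congr_deriv ?_
    rw [← sq, ← sq, cosh_sq]
    field_simp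
    ring
  · have := self_le_sinh_iff.2 hs.le
    rw [sub_nonneg]
    gcongr

theorem mul_sinh_div_sinh_mul_le_cosh_rpow_of_pos {q t : ℝ} (hq0 : 0 < q) (hq1 : q ≤ 1)
    (ht : 0 < t) : q * sinh t / sinh (q * t) ≤ cosh t ^ (1 - q) := by
  set f : ℝ → ℝ := fun s => log (sinh s) - log s
  have hqt : 0 < q * t := mul_pos hq0 ht
  have hlhs : log (q * sinh t / sinh (q * t)) = f t - f (q * t) := by
    simp only [f]
    rw [log_div (by positivity) (sinh_pos_iff.2 hqt).ne',
      log_mul hq0.ne' (sinh_pos_iff.2 ht).ne', log_mul hq0.ne' ht.ne']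
    ring
  have hrhs : log (cosh t) = f (2 * t) - f t := by
    simp only [f]
    rw [sinh_two_mul, log_mul (by positivity) (cosh_pos t).ne',
      log_mul two_ne_zero (sinh_pos_iff.2 ht).ne', log_mul two_ne_zero ht.ne']
    ring
  have hslope : f t - f (q * t) ≤ (1 - q) * (f (2 * t) - f t) := by
    rcases hq1.lt_or_eq with hq1 | rfl
    · have := convexOn_log_sinh_sub_log.slope_mono_adjacent hqt (show 0 < 2 * t by positivity)
        (show q * t < t by nlinarith) (show t < 2 * t by linarith)
      rw [show t - q * t = (1 - q) * t by ring, show 2 * t - t = t by ring,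
        div_le_div_iff₀ (by nlinarith) ht] at this
      nlinarith
    · simp
  rw [← log_le_log_iff (div_pos (mul_pos hq0 (sinh_pos_iff.2 ht)) (sinh_pos_iff.2 hqt))
    (by positivity), hlhs, log_rpow (cosh_pos t), hrhs]
  exact hslope

theorem mul_sinh_div_sinh_mul_le_cosh_rpow {q t : ℝ} (hq0 : 0 < q) (hq1 : q ≤ 1)
    (ht : t ≠ 0) : q * sinh t / sinh (q * t) ≤ cosh t ^ (1 - q) := by
  rcases ht.lt_or_gt with ht | ht
  · simpa [sinh_neg, mul_neg, neg_div_neg_eq] using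
      mul_sinh_div_sinh_mul_le_cosh_rpow_of_pos hq0 hq1 (neg_pos.2 ht)
  · exact mul_sinh_div_sinh_mul_le_cosh_rpow_of_pos hq0 hq1 ht

theorem mul_sinh_div_sinh_mul_pos {q t : ℝ} (hq : 0 < q) (ht : t ≠ 0) :
    0 < q * sinh t / sinh (q * t) := by
  rcases ht.lt_or_gt with ht | ht
  · exact div_pos_of_neg_of_neg (mul_neg_of_pos_of_neg hq (sinh_neg_iff.2 ht))
      (sinh_neg_iff.2 (mul_neg_of_pos_of_neg hq ht))
  · exact div_pos (mul_pos hq (sinh_pos_iff.2 ht)) (sinh_pos_iff.2 (mul_pos hq ht))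

theorem exp_two_mul_sub_one (s : ℝ) : exp (2 * s) - 1 = 2 * exp s * sinh s := by
  rw [sinh_eq, exp_neg, two_mul, exp_add]
  field_simp

theorem exp_two_mul_rpow_sub_one (s a : ℝ) :
    exp (2 * s) ^ a - 1 = 2 * exp (a * s) * sinh (a * s) := by
  rw [← exp_mul, ← exp_two_mul_sub_one]
  ring_nf

noncomputable def hatG (p x : ℝ) : ℝ := p * x ^ (p / 2) * (x - 1) / (x ^ p - 1)

noncomputable def kantorovich (x : ℝ) : ℝ := (x + 1) ^ 2 / (4 * x)

noncomputable def wignerYanaseDyson (p x : ℝ) : ℝ :=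
  p * (1 - p) * (x - 1) ^ 2 / ((x ^ p - 1) * (x ^ (1 - p) - 1))

theorem hatG_exp_two_mul (p t : ℝ) :
    hatG p (exp (2 * t)) = exp t * (p * sinh t / sinh (p * t)) := by
  rw [hatG, exp_two_mul_sub_one, exp_two_mul_rpow_sub_one, ← exp_mul]
  field_simp

theorem wignerYanaseDyson_exp_two_mul (p t : ℝ) :
    wignerYanaseDyson p (exp (2 * t)) =
      hatG p (exp (2 * t)) * ((1 - p) * sinh t / sinh ((1 - p) * t)) := by
  rw [wignerYanaseDyson, hatG, exp_two_mul_sub_one, exp_two_mul_rpow_sub_one,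
    exp_two_mul_rpow_sub_one, ← exp_mul]
  field_simp
  rw [mul_assoc _ (exp (p * t)), ← exp_add]
  ring_nf

theorem kantorovich_exp_two_mul (t : ℝ) : kantorovich (exp (2 * t)) = cosh t ^ 2 := by
  rw [kantorovich, cosh_eq, two_mul, exp_add, exp_neg]
  field_simp
  ring

theorem hatG_ge_kantorovich_wyd (x p : ℝ) (hx : 0 < x) (hx1 : x ≠ 1)
    (hp0 : 0 < p) (hp1 : p ≤ 1 / 2) :
    p * x ^ (p / 2) * (x - 1) / (x ^ p - 1) ≥
      ((x + 1) ^ 2 / (4 * x)) ^ (-(p * (1 - p))) *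
        (p * (1 - p) * (x - 1) ^ 2 / ((x ^ p - 1) * (x ^ (1 - p) - 1))) := by
  obtain ⟨t, ht, rfl⟩ : ∃ t, t ≠ 0 ∧ x = exp (2 * t) :=
    ⟨log x / 2, by simpa using log_ne_zero_of_pos_of_ne_one hx hx1,
      by rw [mul_div_cancel₀ _ two_ne_zero, exp_log hx]⟩
  change hatG p _ ≥ kantorovich _ ^ (-(p * (1 - p))) * wignerYanaseDyson p _
  have hG : 0 < hatG p (exp (2 * t)) := by
    rw [hatG_exp_two_mul]
    exact mul_pos (exp_pos t) (mul_sinh_div_sinh_mul_pos hp0 ht)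
  have hK : (1 - p) * sinh t / sinh ((1 - p) * t) ≤ (cosh t ^ 2) ^ (p * (1 - p)) := calc
    _ ≤ cosh t ^ (1 - (1 - p)) :=
      mul_sinh_div_sinh_mul_le_cosh_rpow (by linarith) (by linarith) ht
    _ ≤ cosh t ^ (2 * (p * (1 - p))) :=
      rpow_le_rpow_of_exponent_le (one_le_cosh t) (by nlinarith)
    _ = (cosh t ^ 2) ^ (p * (1 - p)) := by rw [rpow_mul (cosh_pos t).le, rpow_two]
  rw [wignerYanaseDyson_exp_two_mul, kantorovich_exp_two_mul, rpow_neg (by positivity), ge_iff_le,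
    inv_mul_le_iff₀ (by positivity)]
  exact (mul_le_mul_of_nonneg_left hK hG.le).trans_eq (mul_comm _ _)
end
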